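/- Let f ∈ Id(S) be nonzero and write f = Σᵢ αᵢaᵢsᵢbᵢ with sᵢ ∈ S ⊆ k⟨X⟩⊗k⟨Y⟩. If the pairwise equal maximal words w = aᵢ s̄ᵢ bᵢ (attained for indices 1, …, l with l ≥ 2) satisfy that all compositions in S are trivial, then f admits another such representation in which either the number l of maximal terms decreases or the maximal word w decreases; consequently f̄ = as̄b for some s ∈ S, a, b ∈ N. -/

import Mathlib

/-- A monomial order: a well-founded strict total order compatible with multiplication. -/
def MonOrd {M : Type*} [Monoid M] (lt : M → M → Prop) : Prop :=
  IsStrictTotalOrder M lt ∧ WellFounded lt ∧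
    ∀ u v w₁ w₂ : M, lt u v → lt (w₁ * u * w₂) (w₁ * v * w₂)

/-- `m` is the leading word of `f` with respect to the order `lt`. -/
def IsLeadR {k M : Type*} [Semiring k] (lt : M → M → Prop)
    (f : MonoidAlgebra k M) (m : M) : Prop :=
  m ∈ f.coeff.support ∧ ∀ u ∈ f.coeff.support, u ≠ m → lt u m

/-- `f` is monic: its leading coefficient is `1`. -/
def MonicR {k M : Type*} [Semiring k] (lt : M → M → Prop) (f : MonoidAlgebra k M) : Prop :=
  ∃ m, IsLeadR lt f m ∧ f.coeff m = 1

/-- The monomial `m` viewed as an element of the monoid algebra. -/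
noncomputable def mono (k : Type*) {M : Type*} [Semiring k] [Monoid M] (m : M) :
    MonoidAlgebra k M := MonoidAlgebra.of k M m

/-- `h` is trivial modulo `(S, w)`: it is a linear combination `Σ αᵢ aᵢ sᵢ bᵢ`
with `sᵢ ∈ S` and leading words `aᵢ s̄ᵢ bᵢ < w`. -/
def TrivModR {k M : Type*} [Semiring k] [Monoid M] (lt : M → M → Prop)
    (S : Set (MonoidAlgebra k M)) (w : M) (h : MonoidAlgebra k M) : Prop :=
  ∃ (n : ℕ) (α : Fin n → k) (a b : Fin n → M) (s : Fin n → MonoidAlgebra k M),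
    (∀ i, s i ∈ S) ∧
    h = ∑ i, α i • (mono k (a i) * s i * mono k (b i)) ∧
    ∀ i, ∃ m, IsLeadR lt (s i) m ∧ lt (a i * m * b i) w

/-- Gröbner–Shirshov basis in a free associative algebra `k⟨Z⟩`:
all intersection and inclusion compositions are trivial. -/
def FIsGSB {k Z : Type*} [Ring k] (lt : FreeMonoid Z → FreeMonoid Z → Prop)
    (S : Set (MonoidAlgebra k (FreeMonoid Z))) : Prop :=
  (∀ s ∈ S, MonicR lt s) ∧
  ∀ f ∈ S, ∀ g ∈ S, ∀ mf mg : FreeMonoid Z, IsLeadR lt f mf → IsLeadR lt g mg →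
    ((∀ a b : FreeMonoid Z, mf * b = a * mg →
        (mf * b).length < mf.length + mg.length →
        TrivModR lt S (mf * b) (f * mono k b - mono k a * g)) ∧
     (∀ a b : FreeMonoid Z, mf = a * mg * b →
        TrivModR lt S mf (f - mono k a * g * mono k b)))

/-- the deg-lex order on words induced by an order on letters -/
def degLex {A : Type*} (ltA : A → A → Prop) (u v : FreeMonoid A) : Prop :=
  u.length < v.length ∨ (u.length = v.length ∧ List.Lex ltA u.toList v.toList)

/-- Normal words of `k⟨X⟩ ⊗ k⟨Y⟩`: the monoid `X* × Y*`
(whose multiplication is `(u^X u^Y)(v^X v^Y) = u^X v^X u^Y v^Y`). -/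
abbrev NW (X Y : Type*) := FreeMonoid X × FreeMonoid Y

/-- the (deg-)lex order on `N = X*Y*` built from orders on `X*` and `Y*`:
`u > v` iff `u^X > v^X` or (`u^X = v^X` and `u^Y > v^Y`). -/
def lexNW {X Y : Type*} (ltX : FreeMonoid X → FreeMonoid X → Prop)
    (ltY : FreeMonoid Y → FreeMonoid Y → Prop) (u v : NW X Y) : Prop :=
  ltX u.1 v.1 ∨ (u.1 = v.1 ∧ ltY u.2 v.2)

/-- All compositions `(f,g)_w = p` in `k⟨X⟩ ⊗ k⟨Y⟩`, where `mf, mg` are the leading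
words of `f, g`.  The cases are: 1.1 `X`-inclusion only, 1.2 `Y`-inclusion only,
1.3 `X,Y`-inclusion, 1.4 `X,Y`-skew-inclusion, 2.1 `X`-intersection only,
2.2 `Y`-intersection only, 2.3 `X,Y`-intersection, 2.4 `X,Y`-skew-intersection,
3.1 `X`-inclusion and `Y`-intersection, 3.2 `X`-intersection and `Y`-inclusion. -/
def IsComp {k X Y : Type*} [Ring k] (f g : MonoidAlgebra k (NW X Y))
    (mf mg : NW X Y) (p : MonoidAlgebra k (NW X Y)) (w : NW X Y) : Prop :=
  let e : NW X Y → MonoidAlgebra k (NW X Y) := fun m => mono k m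
  let fx := mf.1; let fy := mf.2; let gx := mg.1; let gy := mg.2
  -- 1.1 X-inclusion only
  (∃ (a b : FreeMonoid X) (c : FreeMonoid Y), fx = a * gx * b ∧
     ((w = (fx, fy * c * gy) ∧ p = f * e (1, c * gy) - e (a, fy * c) * g * e (b, 1)) ∨
      (w = (fx, gy * c * fy) ∧ p = e (1, gy * c) * f - e (a, 1) * g * e (b, c * fy)))) ∨
  -- 1.2 Y-inclusion only
  (∃ (a : FreeMonoid X) (c d : FreeMonoid Y), fy = c * gy * d ∧
     ((w = (fx * a * gx, fy) ∧ p = f * e (a * gx, 1) - e (fx * a, c) * g * e (1, d)) ∨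
      (w = (gx * a * fx, fy) ∧ p = e (gx * a, 1) * f - e (1, c) * g * e (a * fx, d)))) ∨
  -- 1.3 X,Y-inclusion
  (∃ (a b : FreeMonoid X) (c d : FreeMonoid Y), fx = a * gx * b ∧ fy = c * gy * d ∧
     w = (fx, fy) ∧ p = f - e (a, c) * g * e (b, d)) ∨
  -- 1.4 X,Y-skew-inclusion
  (∃ (a b : FreeMonoid X) (c d : FreeMonoid Y), fx = a * gx * b ∧ gy = c * fy * d ∧
     w = (fx, gy) ∧ p = e (1, c) * f * e (1, d) - e (a, 1) * g * e (b, 1)) ∨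
  -- 2.1 X-intersection only
  (∃ (a b : FreeMonoid X) (c : FreeMonoid Y), fx * a = b * gx ∧
     (fx * a).length < fx.length + gx.length ∧
     ((w = (fx * a, fy * c * gy) ∧ p = f * e (a, c * gy) - e (b, fy * c) * g) ∨
      (w = (fx * a, gy * c * fy) ∧
        p = e (1, gy * c) * f * e (a, 1) - e (b, 1) * g * e (1, c * fy)))) ∨
  -- 2.2 Y-intersection only
  (∃ (a : FreeMonoid X) (c d : FreeMonoid Y), fy * c = d * gy ∧
     (fy * c).length < fy.length + gy.length ∧
     ((w = (fx * a * gx, fy * c) ∧ p = f * e (a * gx, c) - e (fx * a, d) * g) ∨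
      (w = (gx * a * fx, fy * c) ∧
        p = e (gx * a, 1) * f * e (1, c) - e (1, d) * g * e (a * fx, 1)))) ∨
  -- 2.3 X,Y-intersection
  (∃ (a b : FreeMonoid X) (c d : FreeMonoid Y), fx * a = b * gx ∧ fy * c = d * gy ∧
     (fx * a).length < fx.length + gx.length ∧ (fy * c).length < fy.length + gy.length ∧
     w = (fx * a, fy * c) ∧ p = f * e (a, c) - e (b, d) * g) ∨
  -- 2.4 X,Y-skew-intersection
  (∃ (a b : FreeMonoid X) (c d : FreeMonoid Y), fx * a = b * gx ∧ c * fy = gy * d ∧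
     (fx * a).length < fx.length + gx.length ∧ (c * fy).length < fy.length + gy.length ∧
     w = (fx * a, c * fy) ∧ p = e (1, c) * f * e (a, 1) - e (b, 1) * g * e (1, d)) ∨
  -- 3.1 X-inclusion and Y-intersection
  (∃ (a b : FreeMonoid X) (c d : FreeMonoid Y), fx = a * gx * b ∧
     ((fy * c = d * gy ∧ (fy * c).length < fy.length + gy.length ∧
        w = (fx, fy * c) ∧ p = f * e (1, c) - e (a, d) * g * e (b, 1)) ∨
      (c * fy = gy * d ∧ (c * fy).length < fy.length + gy.length ∧
        w = (fx, c * fy) ∧ p = e (1, c) * f - e (a, 1) * g * e (b, d)))) ∨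
  -- 3.2 X-intersection and Y-inclusion
  (∃ (a b : FreeMonoid X) (c d : FreeMonoid Y), fx * a = b * gx ∧
     (fx * a).length < fx.length + gx.length ∧
     ((fy = c * gy * d ∧ w = (fx * a, fy) ∧ p = f * e (a, 1) - e (b, c) * g * e (1, d)) ∨
      (gy = c * fy * d ∧ w = (fx * a, gy) ∧ p = e (1, c) * f * e (a, d) - e (b, 1) * g)))

/-- Gröbner–Shirshov basis in `k⟨X⟩ ⊗ k⟨Y⟩`: a set of monic polynomials
all of whose compositions are trivial. -/
def IsGSB {k X Y : Type*} [Ring k] (lt : NW X Y → NW X Y → Prop)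
    (S : Set (MonoidAlgebra k (NW X Y))) : Prop :=
  (∀ s ∈ S, MonicR lt s) ∧
  ∀ f ∈ S, ∀ g ∈ S, ∀ (mf mg : NW X Y) (p : MonoidAlgebra k (NW X Y)) (w : NW X Y),
    IsLeadR lt f mf → IsLeadR lt g mg → IsComp f g mf mg p w → TrivModR lt S w p

/-- the abelianization map `γ : X* → [X]`, with `[X]` the free commutative monoid
on `X` realized as `Multiplicative (Multiset X)`. -/
def gam {X : Type*} (u : FreeMonoid X) : Multiplicative (Multiset X) :=
  Multiplicative.ofAdd (↑u.toList : Multiset X)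

/-- the order on `X*` lifted from a monomial order on `[X]`:
`u > v` iff `γ(u) > γ(v)`, or `γ(u) = γ(v)` and `u >_lex v`. -/
def liftOrd {X : Type*} [LinearOrder X]
    (ltC : Multiplicative (Multiset X) → Multiplicative (Multiset X) → Prop)
    (u v : FreeMonoid X) : Prop :=
  ltC (gam u) (gam v) ∨ (gam u = gam v ∧ List.Lex (· < ·) u.toList v.toList)

/-- `δ` on monomials: the weakly increasing word representing a commutative monomial. -/
noncomputable def dword {X : Type*} [LinearOrder X] (m : Multiplicative (Multiset X)) :
    FreeMonoid X :=
  FreeMonoid.ofList (Multiset.sort (Multiplicative.toAdd m) (· ≤ ·))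

/-- the lexicographic splitting `δ : k[X] → k⟨X⟩`. -/
noncomputable def deltaMap {k X : Type*} [Semiring k] [LinearOrder X]
    (f : MonoidAlgebra k (Multiplicative (Multiset X))) :
    MonoidAlgebra k (FreeMonoid X) :=
  MonoidAlgebra.mapDomain dword f

/-- the set `S₁ = {xᵢxⱼ - xⱼxᵢ : xᵢ > xⱼ}` of commutators in `k⟨X⟩`. -/
noncomputable def commSet (k X : Type*) [Ring k] [LinearOrder X] :
    Set (MonoidAlgebra k (FreeMonoid X)) :=
  {p | ∃ i j : X, j < i ∧
    p = mono k (FreeMonoid.of i * FreeMonoid.of j) - mono k (FreeMonoid.of j * FreeMonoid.of i)}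

/-- `U(m)`: commutative monomials in the variables strictly between the least and the
greatest variable occurring in `m`. -/
def UU {X : Type*} [LinearOrder X] (m : Multiplicative (Multiset X)) :
    Set (Multiplicative (Multiset X)) :=
  {u | ∀ y ∈ Multiplicative.toAdd u,
     (∃ z ∈ Multiplicative.toAdd m, z < y) ∧ (∃ z ∈ Multiplicative.toAdd m, y < z)}

/-- Normal words of `k[X] ⊗ k⟨Y⟩`: the monoid `[X]Y*`. -/
abbrev CW (X Y : Type*) := Multiplicative (Multiset X) × FreeMonoid Y

/-- the order on `[X]Y*`: compare the `Y`-part first, then the `[X]`-part. -/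
def cwOrd {X Y : Type*}
    (ltC : Multiplicative (Multiset X) → Multiplicative (Multiset X) → Prop)
    (ltY : FreeMonoid Y → FreeMonoid Y → Prop) (u v : CW X Y) : Prop :=
  ltY u.2 v.2 ∨ (u.2 = v.2 ∧ ltC u.1 v.1)

/-- the order on `X*Y*` lifted from the order on `[X]Y*`, breaking ties by `lex`
on the `X`-component. -/
def liftNW {X Y : Type*} [LinearOrder X]
    (ltC : Multiplicative (Multiset X) → Multiplicative (Multiset X) → Prop)
    (ltY : FreeMonoid Y → FreeMonoid Y → Prop) (u v : NW X Y) : Prop :=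
  cwOrd ltC ltY (gam u.1, u.2) (gam v.1, v.2) ∨
    ((gam u.1 = gam v.1 ∧ u.2 = v.2) ∧ List.Lex (· < ·) u.1.toList v.1.toList)

/-- `δ : k[X] ⊗ k⟨Y⟩ → k⟨X⟩ ⊗ k⟨Y⟩`, the lexicographic splitting extended by the
identity on `Y`-words. -/
noncomputable def deltaNW {k X Y : Type*} [Semiring k] [LinearOrder X]
    (f : MonoidAlgebra k (CW X Y)) : MonoidAlgebra k (NW X Y) :=
  MonoidAlgebra.mapDomain (fun m : CW X Y => ((dword m.1, m.2) : NW X Y)) f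

/-- Mikhalev–Zolotykh compositions in `k[X] ⊗ k⟨Y⟩`: inclusion `C₁`, overlap `C₂`
and external `C₃` compositions, where `mf`, `mg` are the leading words of `f`, `g`,
and `L = lcm(mf^X, mg^X)`. -/
def MZComp {k X Y : Type*} [Ring k] [DecidableEq X]
    (ltC : Multiplicative (Multiset X) → Multiplicative (Multiset X) → Prop)
    (f g : MonoidAlgebra k (CW X Y)) (mf mg : CW X Y)
    (p : MonoidAlgebra k (CW X Y)) (w : CW X Y) : Prop :=
  let e : CW X Y → MonoidAlgebra k (CW X Y) := fun m => mono k m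
  let fX := Multiplicative.toAdd mf.1; let gX := Multiplicative.toAdd mg.1
  let L : Multiset X := fX ∪ gX
  let Lf : Multiplicative (Multiset X) := Multiplicative.ofAdd (L - fX)
  let Lg : Multiplicative (Multiset X) := Multiplicative.ofAdd (L - gX)
  -- C₁ : inclusion
  (∃ c d : FreeMonoid Y, mf.2 = c * mg.2 * d ∧
     (mf.2 = mg.2 → (mg.1 = mf.1 ∨ ltC mg.1 mf.1)) ∧ (mg.2 = 1 → c = 1) ∧
     w = (Multiplicative.ofAdd L, mf.2) ∧
     p = e (Lf, 1) * f - e (Lg, c) * g * e (1, d)) ∨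
  -- C₂ : overlap
  (∃ c d c₀ : FreeMonoid Y, c₀ ≠ 1 ∧ mf.2 = c * c₀ ∧ mg.2 = c₀ * d ∧
     w = (Multiplicative.ofAdd L, mf.2 * d) ∧
     p = e (Lf, 1) * f * e (1, d) - e (Lg, c) * g) ∨
  -- C₃ : external
  (∃ c₀ : FreeMonoid Y, fX ∩ gX ≠ 0 ∧ mf.2 ≠ 1 ∧ mg.2 ≠ 1 ∧
     w = (Multiplicative.ofAdd L, mf.2 * c₀ * mg.2) ∧
     p = e (Lf, 1) * f * e (1, c₀ * mg.2) - e (Lg, mf.2 * c₀) * g)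

/-- Gröbner–Shirshov basis in `k[X] ⊗ k⟨Y⟩` in the sense of Mikhalev–Zolotykh. -/
def MZGSB {k X Y : Type*} [Ring k] [DecidableEq X]
    (ltC : Multiplicative (Multiset X) → Multiplicative (Multiset X) → Prop)
    (ltY : FreeMonoid Y → FreeMonoid Y → Prop)
    (S : Set (MonoidAlgebra k (CW X Y))) : Prop :=
  (∀ s ∈ S, MonicR (cwOrd ltC ltY) s) ∧
  ∀ f ∈ S, ∀ g ∈ S, ∀ (mf mg : CW X Y) (p : MonoidAlgebra k (CW X Y)) (w : CW X Y),
    IsLeadR (cwOrd ltC ltY) f mf → IsLeadR (cwOrd ltC ltY) g mg →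
    MZComp ltC f g mf mg p w → TrivModR (cwOrd ltC ltY) S w p

/-!
Write `f = Σ αᵢ aᵢ sᵢ bᵢ` with all words `aᵢ s̄ᵢ bᵢ ≤ w`. If two terms `i ≠ j` attain `w`, then
`aᵢ sᵢ bᵢ - aⱼ sⱼ bⱼ` is trivial modulo `(S, w)`. To see this, compare the positions of `s̄ᵢ` and
`s̄ⱼ` in `w` separately in the `X`- and in the `Y`-component. Either the two occurrences do not
overlap in either component, and the difference expands into terms below `w`; or `w = A w₀ B`,
where `w₀` is the word of a composition of `sᵢ` and `sⱼ`, and the triviality of that composition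
lifts to `w`. So two maximal terms can be merged into one plus terms below `w`, which lowers the
number of terms attaining `w`. Well-founded induction on `w`, and then on this number, ends with
a single maximal term with nonzero coefficient. Its word `aᵢ s̄ᵢ bᵢ` is then `f̄`.
-/

namespace MonOrd

variable {M : Type*} [Monoid M] {lt : M → M → Prop}

theorem irrefl (h : MonOrd lt) (x : M) : ¬ lt x x :=
  h.1.toIrrefl.irrefl x

theorem trans (h : MonOrd lt) {x y z : M} : lt x y → lt y z → lt x z :=
  h.1.toIsTrans.trans x y z

theorem asymm (h : MonOrd lt) {x y : M} (hxy : lt x y) : ¬ lt y x :=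
  fun hyx => h.irrefl x (h.trans hxy hyx)

theorem mul_lt_mul (h : MonOrd lt) {u v : M} (huv : lt u v) (a b : M) :
    lt (a * u * b) (a * v * b) :=
  h.2.2 u v a b huv

theorem exists_max (h : MonOrd lt) {ι : Type*} [Finite ι] [Nonempty ι] (g : ι → M) :
    ∃ i₀, ∀ i, g i = g i₀ ∨ lt (g i) (g i₀) := by
  classical
  have := h.1
  let := linearOrderOfSTO lt
  exact Finite.exists_max g

end MonOrd

theorem IsLeadR.unique {k M : Type*} [Semiring k] [Monoid M] {lt : M → M → Prop}
    (hlt : MonOrd lt) {f : MonoidAlgebra k M} {m m' : M} (h : IsLeadR lt f m)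
    (h' : IsLeadR lt f m') : m = m' := by
  by_contra hne
  exact hlt.asymm (h'.2 m h.1 hne) (h.2 m' h'.1 (Ne.symm hne))

section MonoidAlgebra

variable {k M : Type*} [CommRing k] [Monoid M]

theorem mono_mul_mono (x y : M) : mono k x * mono k y = mono k (x * y) :=
  (map_mul (MonoidAlgebra.of k M) x y).symm

theorem mono_one : mono k (1 : M) = 1 :=
  map_one (MonoidAlgebra.of k M)

theorem mono_mul_mul_mono_eq_mapDomain (a b : M) (h : MonoidAlgebra k M) :
    mono k a * h * mono k b = MonoidAlgebra.mapDomain (fun v => a * v * b) h := by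
  induction h using MonoidAlgebra.induction_linear with
  | zero => simp [MonoidAlgebra.mapDomain_zero]
  | add f g hf hg => rw [mul_add, add_mul, MonoidAlgebra.mapDomain_add, hf, hg]
  | single x r =>
      rw [MonoidAlgebra.mapDomain_single]
      simp only [mono, MonoidAlgebra.of_apply, MonoidAlgebra.single_mul_single, one_mul, mul_one]

theorem support_mono_mul_mul_mono_subset [DecidableEq M] (a b : M) (h : MonoidAlgebra k M) :
    (mono k a * h * mono k b).coeff.support ⊆ h.coeff.support.image (fun v => a * v * b) := by
  rw [mono_mul_mul_mono_eq_mapDomain]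
  exact Finsupp.mapDomain_support

theorem coeff_mono_mul_mul_mono {M : Type*} [CancelMonoid M] (a b : M) (h : MonoidAlgebra k M)
    (v : M) : (mono k a * h * mono k b).coeff (a * v * b) = h.coeff v := by
  rw [mono_mul_mul_mono_eq_mapDomain]
  exact Finsupp.mapDomain_apply (fun _ _ huv => mul_left_cancel (mul_right_cancel huv)) h.coeff v

theorem mono_mul_mul_mono_eq_sum (a b : M) (h : MonoidAlgebra k M) :
    mono k a * h * mono k b = ∑ v ∈ h.coeff.support, h.coeff v • mono k (a * v * b) := by
  rw [mono_mul_mul_mono_eq_mapDomain, MonoidAlgebra.mapDomain, Finsupp.mapDomain, Finsupp.sum,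
    MonoidAlgebra.ofCoeff_sum]
  refine Finset.sum_congr rfl fun v _ => ?_
  rw [mono, MonoidAlgebra.of_apply, MonoidAlgebra.smul_single, smul_eq_mul, mul_one,
    MonoidAlgebra.ofCoeff_single]

variable {lt : M → M → Prop}

theorem IsLeadR.mem_support_mono_mul_mul_mono (hlt : MonOrd lt) {s : MonoidAlgebra k M} {m : M}
    (hm : IsLeadR lt s m) (a b : M) {u : M} (hu : u ∈ (mono k a * s * mono k b).coeff.support) :
    u = a * m * b ∨ lt u (a * m * b) := by
  classical
  obtain ⟨v, hv, rfl⟩ := Finset.mem_image.1 (support_mono_mul_mul_mono_subset a b s hu)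
  rcases eq_or_ne v m with rfl | hne
  · exact Or.inl rfl
  · exact Or.inr (hlt.mul_lt_mul (hm.2 v hv hne) a b)

theorem IsLeadR.coeff_mono_mul_mul_mono_of_lt (hlt : MonOrd lt) {s : MonoidAlgebra k M} {m : M}
    (hm : IsLeadR lt s m) (a b : M) {w : M} (hw : lt (a * m * b) w) :
    (mono k a * s * mono k b).coeff w = 0 := by
  by_contra h0
  rcases hm.mem_support_mono_mul_mul_mono hlt a b (Finsupp.mem_support_iff.2 h0) with rfl | hlt'
  · exact hlt.irrefl _ hw
  · exact hlt.irrefl _ (hlt.trans hlt' hw)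

theorem MonicR.coeff_lead (hlt : MonOrd lt) {s : MonoidAlgebra k M} (hs : MonicR lt s) {m : M}
    (hm : IsLeadR lt s m) : s.coeff m = 1 := by
  obtain ⟨m', hm', h1⟩ := hs
  rwa [hm'.unique hlt hm] at h1

end MonoidAlgebra

namespace TrivModR

variable {k M : Type*} [CommRing k] [Monoid M] {lt : M → M → Prop} {S : Set (MonoidAlgebra k M)}
  {w : M} {s t : MonoidAlgebra k M} {ms mt : M}

theorem neg {h : MonoidAlgebra k M} (H : TrivModR lt S w h) : TrivModR lt S w (-h) := by
  obtain ⟨n, α, a, b, s, hS, rfl, hlt⟩ := H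
  exact ⟨n, fun i => -α i, a, b, s, hS, by simp [neg_smul], hlt⟩

theorem smul {h : MonoidAlgebra k M} (r : k) (H : TrivModR lt S w h) : TrivModR lt S w (r • h) := by
  obtain ⟨n, α, a, b, s, hS, rfl, hlt⟩ := H
  exact ⟨n, fun i => r * α i, a, b, s, hS, by simp [Finset.smul_sum, smul_smul], hlt⟩

theorem add {h₁ h₂ : MonoidAlgebra k M} (H₁ : TrivModR lt S w h₁) (H₂ : TrivModR lt S w h₂) :
    TrivModR lt S w (h₁ + h₂) := by
  obtain ⟨n₁, α₁, a₁, b₁, s₁, hS₁, rfl, hl₁⟩ := H₁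
  obtain ⟨n₂, α₂, a₂, b₂, s₂, hS₂, rfl, hl₂⟩ := H₂
  refine ⟨n₁ + n₂, Fin.append α₁ α₂, Fin.append a₁ a₂, Fin.append b₁ b₂, Fin.append s₁ s₂,
    Fin.addCases (by simpa using hS₁) (by simpa using hS₂), by simp [Fin.sum_univ_add],
    Fin.addCases (by simpa using hl₁) (by simpa using hl₂)⟩

theorem sub {h₁ h₂ : MonoidAlgebra k M} (H₁ : TrivModR lt S w h₁) (H₂ : TrivModR lt S w h₂) :
    TrivModR lt S w (h₁ - h₂) := by
  rw [sub_eq_add_neg]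
  exact H₁.add H₂.neg

theorem sum {ι : Type*} (F : Finset ι) (κ : ι → k) (a b : ι → M) (s : ι → MonoidAlgebra k M)
    (hs : ∀ i ∈ F, s i ∈ S) (hlead : ∀ i ∈ F, ∃ m, IsLeadR lt (s i) m ∧ lt (a i * m * b i) w) :
    TrivModR lt S w (∑ i ∈ F, κ i • (mono k (a i) * s i * mono k (b i))) := by
  let e := F.equivFin.symm
  refine ⟨F.card, fun j => κ (e j), fun j => a (e j), fun j => b (e j), fun j => s (e j),
    fun j => hs _ (e j).2, ?_, fun j => hlead _ (e j).2⟩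
  rw [← Finset.sum_coe_sort F]
  exact (e.sum_comp fun i : F => κ i • (mono k (a i) * s i * mono k (b i))).symm

theorem mono_mul_mul_mono (hlt : MonOrd lt) {h : MonoidAlgebra k M} (H : TrivModR lt S w h)
    (A B : M) : TrivModR lt S (A * w * B) (mono k A * h * mono k B) := by
  obtain ⟨n, α, a, b, s, hS, rfl, hl⟩ := H
  refine ⟨n, α, fun i => A * a i, fun i => b i * B, s, hS, ?_, fun i => ?_⟩
  · simp only [Finset.mul_sum, Finset.sum_mul, mul_smul_comm, smul_mul_assoc, ← mono_mul_mono,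
      mul_assoc]
  · obtain ⟨m, hm, hlt'⟩ := hl i
    exact ⟨m, hm, by simpa only [mul_assoc] using hlt.mul_lt_mul hlt' A B⟩

theorem sub_symm {a b c d w w' : M} (hw : w = w')
    (H : TrivModR lt S w' (mono k c * t * mono k d - mono k a * s * mono k b)) :
    TrivModR lt S w (mono k a * s * mono k b - mono k c * t * mono k d) := by
  rw [hw, ← neg_sub]
  exact H.neg

theorem sub_of_mono_mul_mul_mono (hlt : MonOrd lt) {a b c d : M} (A B pa pb pc pd w₀ : M)
    (ha : a = A * pa) (hb : b = pb * B) (hc : c = A * pc) (hd : d = pd * B)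
    (hw : a * ms * b = A * w₀ * B)
    (H : TrivModR lt S w₀ (mono k pa * s * mono k pb - mono k pc * t * mono k pd)) :
    TrivModR lt S (a * ms * b) (mono k a * s * mono k b - mono k c * t * mono k d) := by
  have hlift : mono k a * s * mono k b - mono k c * t * mono k d
      = mono k A * (mono k pa * s * mono k pb - mono k pc * t * mono k pd) * mono k B := by
    conv_lhs => rw [ha, hb, hc, hd]
    simp only [← mono_mul_mono, mul_sub, sub_mul, mul_assoc]
  rw [hlift, hw]
  exact H.mono_mul_mul_mono hlt A B

end TrivModR

/-- The occurrences of `u` in `a * u * b` and of `v` in `c * v * d` (inside the same word) do not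
overlap: either one can be replaced by an arbitrary word while the other stays in place, and the
two replacements commute. -/
def NonOverlapping {M : Type*} [Monoid M] (a u b c v d : M) : Prop :=
  ∃ P Q R T : M → M, (∀ x, a * x * b = P x * v * Q x) ∧ (∀ y, c * y * d = R y * u * T y) ∧
    ∀ x y, P x * y * Q x = R y * x * T y

namespace NonOverlapping

variable {M : Type*} [Monoid M] {a u b c v d E : M}

theorem of_before (hc : c = a * u * E) (hb : b = E * v * d) : NonOverlapping a u b c v d :=
  ⟨fun x => a * x * E, fun _ => d, fun _ => a, fun y => E * y * d,
    fun x => by simp [hb, mul_assoc], fun y => by simp [hc, mul_assoc],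
    fun x y => by simp [mul_assoc]⟩

theorem of_after (ha : a = c * v * E) (hd : d = E * u * b) : NonOverlapping a u b c v d :=
  ⟨fun _ => c, fun x => E * x * b, fun y => c * y * E, fun _ => b,
    fun x => by simp [ha, mul_assoc], fun y => by simp [hd, mul_assoc],
    fun x y => by simp [mul_assoc]⟩

theorem prod {N : Type*} [Monoid N] {a u b c v d : M × N}
    (h₁ : NonOverlapping a.1 u.1 b.1 c.1 v.1 d.1) (h₂ : NonOverlapping a.2 u.2 b.2 c.2 v.2 d.2) :
    NonOverlapping a u b c v d := by
  obtain ⟨P₁, Q₁, R₁, T₁, hPQ₁, hRT₁, h₁⟩ := h₁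
  obtain ⟨P₂, Q₂, R₂, T₂, hPQ₂, hRT₂, h₂⟩ := h₂
  exact ⟨fun x => (P₁ x.1, P₂ x.2), fun x => (Q₁ x.1, Q₂ x.2), fun y => (R₁ y.1, R₂ y.2),
    fun y => (T₁ y.1, T₂ y.2), fun x => Prod.ext (hPQ₁ x.1) (hPQ₂ x.2),
    fun y => Prod.ext (hRT₁ y.1) (hRT₂ y.2), fun x y => Prod.ext (h₁ x.1 y.1) (h₂ x.2 y.2)⟩

end NonOverlapping

section NonOverlapping

variable {k M : Type*} [CommRing k] [Monoid M] {lt : M → M → Prop} {S : Set (MonoidAlgebra k M)}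

theorem mono_mul_mul_mono_eq_add_sum [DecidableEq M] {s : MonoidAlgebra k M} {m : M}
    (hm : m ∈ s.coeff.support) (h1 : s.coeff m = 1) (a b : M) :
    mono k a * s * mono k b
      = mono k (a * m * b) + ∑ v ∈ s.coeff.support.erase m, s.coeff v • mono k (a * v * b) := by
  rw [mono_mul_mul_mono_eq_sum, ← Finset.add_sum_erase _ _ hm, h1, one_smul]

theorem TrivModR.sub_of_nonOverlapping (hlt : MonOrd lt) {s t : MonoidAlgebra k M}
    (hs : s ∈ S) (ht : t ∈ S) (hsm : MonicR lt s) (htm : MonicR lt t) {ms mt : M}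
    (hms : IsLeadR lt s ms) (hmt : IsLeadR lt t mt) {a b c d : M} (hw : a * ms * b = c * mt * d)
    (hsep : NonOverlapping a ms b c mt d) :
    TrivModR lt S (a * ms * b) (mono k a * s * mono k b - mono k c * t * mono k d) := by
  classical
  obtain ⟨P, Q, R, T, hPQ, hRT, hcross⟩ := hsep
  have expand_s := mono_mul_mul_mono_eq_add_sum hms.1 (hsm.coeff_lead hlt hms)
  have expand_t := mono_mul_mul_mono_eq_add_sum hmt.1 (htm.coeff_lead hlt hmt)
  set Fs := s.coeff.support.erase ms
  set Ft := t.coeff.support.erase mt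
  -- Expanding `s` and `t` around their leading words, the double sums
  -- `Σ_v Σ_u s_v t_u (P v * u * Q v)` on the right cancel by `hcross`.
  have key : mono k a * s * mono k b - mono k c * t * mono k d
      = ∑ v ∈ Fs, s.coeff v • (mono k (P v) * t * mono k (Q v))
        - ∑ u ∈ Ft, t.coeff u • (mono k (R u) * s * mono k (T u)) := by
    simp only [expand_s, expand_t, ← hPQ, ← hRT, hw, smul_add, Finset.sum_add_distrib,
      Finset.smul_sum, smul_smul, hcross]
    rw [Finset.sum_comm (s := Ft)]
    simp only [mul_comm (t.coeff _)]
    abel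
  rw [key]
  refine TrivModR.sub (TrivModR.sum _ _ P Q _ (fun _ _ => ht) fun v hv => ⟨mt, hmt, ?_⟩)
    (TrivModR.sum _ _ R T _ (fun _ _ => hs) fun u hu => ⟨ms, hms, ?_⟩)
  · rw [← hPQ]
    exact hlt.mul_lt_mul (hms.2 v (Finset.mem_of_mem_erase hv) (Finset.ne_of_mem_erase hv)) a b
  · rw [← hRT, hw]
    exact hlt.mul_lt_mul (hmt.2 u (Finset.mem_of_mem_erase hu) (Finset.ne_of_mem_erase hu)) c d

end NonOverlapping

theorem Fin.sum_smul_eq_merge {k V : Type*} [Ring k] [AddCommGroup V] [Module k V] {n : ℕ}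
    (α : Fin (n + 1) → k) (T : Fin (n + 1) → V) (p : Fin (n + 1)) (j₀ : Fin n) :
    ∑ i, α i • T i
      = ∑ j, (α (p.succAbove j) + (Pi.single j₀ (α p) : Fin n → k) j) • T (p.succAbove j)
        + α p • (T p - T (p.succAbove j₀)) := by
  rw [Fin.sum_univ_succAbove _ p]
  simp only [add_smul, Finset.sum_add_distrib, Pi.single_apply, ite_smul, zero_smul,
    Finset.sum_ite_eq', Finset.mem_univ, if_true, smul_sub]
  abel

def TrivialOverlaps {k M : Type*} [CommRing k] [Monoid M] (lt : M → M → Prop)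
    (S : Set (MonoidAlgebra k M)) : Prop :=
  ∀ s ∈ S, ∀ t ∈ S, ∀ ms mt a b c d : M, IsLeadR lt s ms → IsLeadR lt t mt →
    a * ms * b = c * mt * d →
    TrivModR lt S (a * ms * b) (mono k a * s * mono k b - mono k c * t * mono k d)

/-- The `S`-words `aᵢ sᵢ bᵢ` of a representation `Σ αᵢ aᵢ sᵢ bᵢ`, with the leading words `s̄ᵢ`;
the coefficients `αᵢ` are kept apart (see `SWords.sum`). -/
structure SWords (k : Type*) {M : Type*} [Semiring k] (lt : M → M → Prop)
    (S : Set (MonoidAlgebra k M)) (n : ℕ) where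
  left : Fin n → M
  right : Fin n → M
  gen : Fin n → MonoidAlgebra k M
  lead : Fin n → M
  gen_mem : ∀ i, gen i ∈ S
  isLeadR : ∀ i, IsLeadR lt (gen i) (lead i)

namespace SWords

variable {k M : Type*} [CommRing k] [Monoid M] {lt : M → M → Prop} {S : Set (MonoidAlgebra k M)}
  {n n' : ℕ}

noncomputable def term (R : SWords k lt S n) (i : Fin n) : MonoidAlgebra k M :=
  mono k (R.left i) * R.gen i * mono k (R.right i)

def word (R : SWords k lt S n) (i : Fin n) : M :=
  R.left i * R.lead i * R.right i

noncomputable def sum (R : SWords k lt S n) (α : Fin n → k) : MonoidAlgebra k M :=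
  ∑ i, α i • R.term i

def comp (R : SWords k lt S n) (e : Fin n' → Fin n) : SWords k lt S n' :=
  ⟨R.left ∘ e, R.right ∘ e, R.gen ∘ e, R.lead ∘ e, fun i => R.gen_mem (e i),
    fun i => R.isLeadR (e i)⟩

def append (R : SWords k lt S n) (R' : SWords k lt S n') : SWords k lt S (n + n') :=
  ⟨Fin.append R.left R'.left, Fin.append R.right R'.right, Fin.append R.gen R'.gen,
    Fin.append R.lead R'.lead, Fin.addCases (by simpa using R.gen_mem) (by simpa using R'.gen_mem),
    Fin.addCases (by simpa using R.isLeadR) (by simpa using R'.isLeadR)⟩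

@[simp]
theorem word_comp (R : SWords k lt S n) (e : Fin n' → Fin n) (i : Fin n') :
    (R.comp e).word i = R.word (e i) :=
  rfl

@[simp]
theorem word_append_castAdd (R : SWords k lt S n) (R' : SWords k lt S n') (i : Fin n) :
    (R.append R').word (Fin.castAdd n' i) = R.word i := by
  simp [word, append]

@[simp]
theorem word_append_natAdd (R : SWords k lt S n) (R' : SWords k lt S n') (i : Fin n') :
    (R.append R').word (Fin.natAdd n i) = R'.word i := by
  simp [word, append]

theorem sum_append (R : SWords k lt S n) (R' : SWords k lt S n') (α : Fin n → k) (β : Fin n' → k) :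
    (R.append R').sum (Fin.append α β) = R.sum α + R'.sum β := by
  simp [sum, term, append, Fin.sum_univ_add]

theorem sum_eq_sum_comp_succAbove (R : SWords k lt S (n + 1)) (α : Fin (n + 1) → k)
    {p : Fin (n + 1)} (hp : α p = 0) : R.sum α = (R.comp p.succAbove).sum (α ∘ p.succAbove) := by
  rw [sum, Fin.sum_univ_succAbove _ p, hp, zero_smul, zero_add]
  rfl

theorem mem_support_sum (hlt : MonOrd lt) (R : SWords k lt S n) (α : Fin n → k) {u : M}
    (hu : u ∈ (R.sum α).coeff.support) : ∃ i, u = R.word i ∨ lt u (R.word i) := by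
  classical
  rw [sum, MonoidAlgebra.coeff_sum] at hu
  obtain ⟨i, -, hi⟩ := Finset.mem_biUnion.1 (Finsupp.support_finsetSum hu)
  rw [MonoidAlgebra.coeff_smul] at hi
  exact ⟨i, (R.isLeadR i).mem_support_mono_mul_mul_mono hlt _ _ (Finsupp.support_smul hi)⟩

theorem mem_support_sum_of_le (hlt : MonOrd lt) (R : SWords k lt S n) (α : Fin n → k) {w : M}
    (hR : ∀ i, R.word i = w ∨ lt (R.word i) w) {u : M} (hu : u ∈ (R.sum α).coeff.support) :
    u = w ∨ lt u w := by
  obtain ⟨i, hi⟩ := R.mem_support_sum hlt α hu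
  rcases hR i with h | h <;> rcases hi with rfl | hi
  · exact Or.inl h
  · exact Or.inr (h ▸ hi)
  · exact Or.inr h
  · exact Or.inr (hlt.trans hi h)

theorem _root_.TrivModR.exists_sWords {w : M} {h : MonoidAlgebra k M} (H : TrivModR lt S w h) :
    ∃ (n : ℕ) (R : SWords k lt S n) (β : Fin n → k), R.sum β = h ∧ ∀ i, lt (R.word i) w := by
  obtain ⟨n, β, a, b, s, hs, rfl, hl⟩ := H
  choose m hm hlt using hl
  exact ⟨n, ⟨a, b, s, m, hs, hm⟩, β, rfl, hlt⟩


theorem exists_merge (hS : TrivialOverlaps lt S) (R : SWords k lt S (n + 1))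
    (α : Fin (n + 1) → k) (p : Fin (n + 1)) (j₀ : Fin n) (hw : R.word p = R.word (p.succAbove j₀)) :
    ∃ (n₂ : ℕ) (R' : SWords k lt S (n + n₂)) (α' : Fin (n + n₂) → k), R'.sum α' = R.sum α ∧
      (∀ j, R'.word (Fin.castAdd n₂ j) = R.word (p.succAbove j)) ∧
      ∀ j, lt (R'.word (Fin.natAdd n j)) (R.word p) := by
  have H := hS _ (R.gen_mem p) _ (R.gen_mem _) _ _ _ _ _ _ (R.isLeadR p) (R.isLeadR _) hw
  obtain ⟨n₂, R₂, β, hβ, hlt⟩ := (H.smul (α p)).exists_sWords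
  refine ⟨n₂, (R.comp p.succAbove).append R₂,
    Fin.append (fun j => α (p.succAbove j) + (Pi.single j₀ (α p) : Fin n → k) j) β, ?_, by simp,
    fun j => by rw [word_append_natAdd]; exact hlt j⟩
  rw [sum_append, hβ, sum, sum, Fin.sum_smul_eq_merge α R.term p j₀]
  rfl

theorem exists_fewer_max (hS : TrivialOverlaps lt S) (R : SWords k lt S n) (α : Fin n → k)
    {w : M} {l : ℕ} (hl : 2 ≤ l) (hln : l ≤ n) (hmax : ∀ i : Fin n, (i : ℕ) < l → R.word i = w)
    (hrest : ∀ i : Fin n, l ≤ (i : ℕ) → lt (R.word i) w) :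
    ∃ (n' : ℕ) (R' : SWords k lt S n') (α' : Fin n' → k), R'.sum α' = R.sum α ∧ l - 1 ≤ n' ∧
      (∀ i : Fin n', (i : ℕ) < l - 1 → R'.word i = w) ∧
      ∀ i : Fin n', l - 1 ≤ (i : ℕ) → lt (R'.word i) w := by
  obtain ⟨n, rfl⟩ : ∃ n', n = n' + 1 := Nat.exists_eq_add_one.2 (by omega)
  have h0 : R.word 0 = w := hmax 0 (by simp; omega)
  have h1 : R.word (Fin.succ ⟨0, by omega⟩) = w := hmax _ (by simp; omega)
  obtain ⟨n₂, R', α', hsum, hleft, hright⟩ :=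
    R.exists_merge hS α 0 ⟨0, by omega⟩ (h0.trans h1.symm)
  refine ⟨n + n₂, R', α', hsum, by omega, fun i hi => ?_, fun i hi => ?_⟩
  · induction i using Fin.addCases with
    | left j => rw [hleft, Fin.succAbove_zero]; exact hmax _ (by simp at hi ⊢; omega)
    | right j => simp at hi; omega
  · induction i using Fin.addCases with
    | left j => rw [hleft, Fin.succAbove_zero]; exact hrest _ (by simp at hi ⊢; omega)
    | right j => rw [← h0]; exact hright j

end SWords

namespace SWords

open Finset

variable {k M : Type*} [CommRing k] [CancelMonoid M] {lt : M → M → Prop}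
  {S : Set (MonoidAlgebra k M)} {n : ℕ}

theorem coeff_sum_of_unique (hlt : MonOrd lt) (hmon : ∀ s ∈ S, MonicR lt s)
    (R : SWords k lt S n) (α : Fin n → k) {w : M} (hR : ∀ i, R.word i = w ∨ lt (R.word i) w)
    {p : Fin n} (hp : R.word p = w) (hunique : ∀ i, R.word i = w → i = p) :
    (R.sum α).coeff w = α p := by
  rw [sum, MonoidAlgebra.coeff_sum, Finsupp.finsetSum_apply, Fintype.sum_eq_single p fun i hi => ?_]
  · rw [MonoidAlgebra.coeff_smul_apply, ← hp, term, word, coeff_mono_mul_mul_mono,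
      (hmon _ (R.gen_mem p)).coeff_lead hlt (R.isLeadR p), smul_eq_mul, mul_one]
  · have hi : lt (R.word i) w := (hR i).resolve_left fun h => hi (hunique i h)
    rw [MonoidAlgebra.coeff_smul_apply, term,
      (R.isLeadR i).coeff_mono_mul_mul_mono_of_lt hlt _ _ hi, smul_zero]

theorem isLeadR_sum_of_unique (hlt : MonOrd lt) (hmon : ∀ s ∈ S, MonicR lt s)
    (R : SWords k lt S n) (α : Fin n → k) {w : M} (hR : ∀ i, R.word i = w ∨ lt (R.word i) w)
    {p : Fin n} (hp : R.word p = w) (hunique : ∀ i, R.word i = w → i = p) (hα : α p ≠ 0) :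
    IsLeadR lt (R.sum α) w := by
  refine ⟨?_, fun u hu hne => (R.mem_support_sum_of_le hlt α hR hu).resolve_left hne⟩
  rw [Finsupp.mem_support_iff, R.coeff_sum_of_unique hlt hmon α hR hp hunique]
  exact hα

theorem exists_card_max_lt [DecidableEq M] (hlt : MonOrd lt) (hS : TrivialOverlaps lt S)
    (R : SWords k lt S n) (α : Fin n → k) {w : M} (hR : ∀ i, R.word i = w ∨ lt (R.word i) w)
    {p q : Fin n} (hpq : p ≠ q) (hp : R.word p = w) (hq : R.word q = w) :
    ∃ (n' : ℕ) (R' : SWords k lt S n') (α' : Fin n' → k), R'.sum α' = R.sum α ∧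
      (∀ i, R'.word i = w ∨ lt (R'.word i) w) ∧ #{i | R'.word i = w} < #{i | R.word i = w} := by
  obtain ⟨n, rfl⟩ : ∃ n', n = n' + 1 := Nat.exists_eq_add_one.2 p.pos
  obtain ⟨j₀, rfl⟩ := Fin.exists_succAbove_eq hpq.symm
  obtain ⟨n₂, R', α', hsum, hleft, hright⟩ := R.exists_merge hS α p j₀ (hp.trans hq.symm)
  have hnone : ∀ j, R'.word (Fin.natAdd n j) ≠ w :=
    fun j h => hlt.irrefl w (by simpa [h, hp] using hright j)
  refine ⟨n + n₂, R', α', hsum, fun i => ?_, ?_⟩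
  · induction i using Fin.addCases with
    | left j => rw [hleft]; exact hR _
    | right j => exact Or.inr (hp ▸ hright j)
  · rw [card_filter, card_filter, Fin.sum_univ_add, Fin.sum_univ_succAbove _ p]
    simp [hleft, hp, hnone]

theorem exists_lead_mul_eq (hlt : MonOrd lt) (hmon : ∀ s ∈ S, MonicR lt s)
    (hS : TrivialOverlaps lt S) (w : M) {n : ℕ} (R : SWords k lt S n) (α : Fin n → k)
    (hR : ∀ i, R.word i = w ∨ lt (R.word i) w) {mf : M} (hmf : IsLeadR lt (R.sum α) mf) :
    ∃ t ∈ S, ∃ mt, IsLeadR lt t mt ∧ ∃ c d, mf = c * mt * d := by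
  classical
  induction w using hlt.2.1.induction generalizing n with | _ w IHw => ?_
  suffices H : ∀ N n (R : SWords k lt S n) (α : Fin n → k), #{i | R.word i = w} = N →
      (∀ i, R.word i = w ∨ lt (R.word i) w) → IsLeadR lt (R.sum α) mf →
      ∃ t ∈ S, ∃ mt, IsLeadR lt t mt ∧ ∃ c d, mf = c * mt * d from H _ _ R α rfl hR hmf
  intro N
  induction N using Nat.strong_induction_on with | _ N IHN => ?_
  intro n R α hN hR hmf
  by_cases hdup : ∃ p q, p ≠ q ∧ R.word p = w ∧ R.word q = w
  · obtain ⟨p, q, hpq, hp, hq⟩ := hdup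
    obtain ⟨n', R', α', hsum, hR', hcount⟩ := R.exists_card_max_lt hlt hS α hR hpq hp hq
    exact IHN _ (hN ▸ hcount) _ R' α' rfl hR' (hsum ▸ hmf)
  push Not at hdup
  by_cases hone : ∃ p, R.word p = w
  · obtain ⟨p, hp⟩ := hone
    have hunique : ∀ i, R.word i = w → i = p := fun i hi => by_contra fun h => hdup i p h hi hp
    by_cases hα : α p = 0
    · obtain ⟨n, rfl⟩ : ∃ n', n = n' + 1 := Nat.exists_eq_add_one.2 p.pos
      refine IHN 0 (hN ▸ card_pos.2 ⟨p, by simp [hp]⟩) _ (R.comp p.succAbove) (α ∘ p.succAbove)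
        ?_ (fun j => hR _) (R.sum_eq_sum_comp_succAbove α hα ▸ hmf)
      exact card_eq_zero.2 (filter_eq_empty_iff.2 fun j _ h => p.succAbove_ne j (hunique _ h))
    · refine ⟨R.gen p, R.gen_mem p, R.lead p, R.isLeadR p, R.left p, R.right p, ?_⟩
      rw [hmf.unique hlt (R.isLeadR_sum_of_unique hlt hmon α hR hp hunique hα), ← hp]
      rfl
  · push Not at hone
    cases n with
    | zero => exact absurd hmf.1 (by simp [sum])
    | succ n =>
      obtain ⟨p, hp⟩ := hlt.exists_max R.word
      exact IHw _ ((hR p).resolve_left (hone p)) R α hp hmf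

end SWords

namespace FreeMonoid

variable {Z : Type*}

theorem mul_eq_mul_iff {a b c d : FreeMonoid Z} :
    a * b = c * d ↔ (∃ e, c = a * e ∧ b = e * d) ∨ ∃ e, a = c * e ∧ d = e * b := by
  rw [← toList.injective.eq_iff, toList_mul, toList_mul, List.append_eq_append_iff]
  refine or_congr ?_ ?_ <;>
    exact ⟨fun ⟨e, h₁, h₂⟩ => ⟨ofList e, toList.injective (by simpa using h₁),
      toList.injective (by simpa using h₂)⟩,
      fun ⟨e, h₁, h₂⟩ => ⟨toList e, by simp [h₁], by simp [h₂]⟩⟩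

theorem length_mul_lt_of_overlap {u v E F G : FreeMonoid Z} (hF : F ≠ 1) (hu : u = E * F)
    (hv : v = F * G) : (u * G).length < u.length + v.length := by
  have : 0 < F.length := Nat.pos_of_ne_zero fun h => hF (length_eq_zero.1 h)
  simp only [hu, hv, length_mul]
  omega

theorem occurrence_cases_of_eq {A u B C v D E₀ : FreeMonoid Z} (hC : C = A * E₀)
    (h : u * B = E₀ * (v * D)) :
    (∃ E, C = A * u * E ∧ B = E * v * D) ∨
    (∃ E F, u = E * v * F ∧ C = A * E ∧ D = F * B) ∨
    (∃ E G, u * G = E * v ∧ (u * G).length < u.length + v.length ∧ C = A * E ∧ B = G * D) := by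
  rcases mul_eq_mul_iff.1 h with ⟨e, hE₀, hB⟩ | ⟨e, hu, h'⟩
  · exact Or.inl ⟨e, by rw [hC, hE₀, mul_assoc], by rw [hB, mul_assoc]⟩
  rcases mul_eq_mul_iff.1 h' with ⟨g, he, hD⟩ | ⟨g, hv, hB⟩
  · exact Or.inr (Or.inl ⟨E₀, g, by rw [hu, he, mul_assoc], hC, hD⟩)
  by_cases he : e = 1
  · exact Or.inl ⟨1, by simp [hC, hu, he], by simp [hB, hv, he]⟩
  · exact Or.inr (Or.inr ⟨E₀, g, by rw [hu, hv, mul_assoc],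
      length_mul_lt_of_overlap he hu hv, hC, hB⟩)

theorem occurrence_cases {A u B C v D : FreeMonoid Z} (h : A * u * B = C * v * D) :
    (∃ E, C = A * u * E ∧ B = E * v * D) ∨
    (∃ E, A = C * v * E ∧ D = E * u * B) ∨
    (∃ E F, u = E * v * F ∧ C = A * E ∧ D = F * B) ∨
    (∃ E F, v = E * u * F ∧ A = C * E ∧ B = F * D) ∨
    (∃ E G, u * G = E * v ∧ (u * G).length < u.length + v.length ∧ C = A * E ∧ B = G * D) ∨
    (∃ E G, v * G = E * u ∧ (v * G).length < u.length + v.length ∧ A = C * E ∧ D = G * B) := by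
  simp only [mul_assoc] at h
  rcases mul_eq_mul_iff.1 h with ⟨e, hC, h'⟩ | ⟨e, hA, h'⟩
  · rcases occurrence_cases_of_eq hC h' with h₁ | h₃ | h₅
    · exact Or.inl h₁
    · exact Or.inr (Or.inr (Or.inl h₃))
    · exact Or.inr (Or.inr (Or.inr (Or.inr (Or.inl h₅))))
  · rcases occurrence_cases_of_eq hA h' with h₂ | h₄ | ⟨E, G, h₆, hlen, h₆'⟩
    · exact Or.inr (Or.inl h₂)
    · exact Or.inr (Or.inr (Or.inr (Or.inl h₄)))
    · exact Or.inr (Or.inr (Or.inr (Or.inr (Or.inr ⟨E, G, h₆, by omega, h₆'⟩))))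

end FreeMonoid

/- In each case below `a * ms * b = A * w₀ * B`, where `w₀` spans both occurrences in each
component and is the word of one of the compositions listed in `IsComp`. -/
section Compositions

open FreeMonoid

variable {k X Y : Type*} [CommRing k] {lt : NW X Y → NW X Y → Prop}
  {S : Set (MonoidAlgebra k (NW X Y))} {s t : MonoidAlgebra k (NW X Y)} {ms mt a b c d : NW X Y}

theorem trivModR_of_inclusionX (hlt : MonOrd lt)
    (hst : ∀ p w₀, IsComp s t ms mt p w₀ → TrivModR lt S w₀ p) {E F : FreeMonoid X}
    (hX : ms.1 = E * mt.1 * F) (hc : c.1 = a.1 * E) (hd : d.1 = F * b.1)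
    (hwY : a.2 * ms.2 * b.2 = c.2 * mt.2 * d.2) :
    TrivModR lt S (a * ms * b) (mono k a * s * mono k b - mono k c * t * mono k d) := by
  rcases occurrence_cases hwY with ⟨E₂, h₁, h₂⟩ | ⟨E₂, h₁, h₂⟩ | ⟨E₂, F₂, hY, h₁, h₂⟩ |
    ⟨E₂, F₂, hY, h₁, h₂⟩ | ⟨E₂, G₂, hY, hlen, h₁, h₂⟩ | ⟨E₂, G₂, hY, hlen, h₁, h₂⟩ <;> clear hwY
  · refine TrivModR.sub_of_mono_mul_mul_mono hlt a (b.1, d.2) 1 (1, E₂ * mt.2) (E, ms.2 * E₂)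
      (F, 1) (ms.1, ms.2 * E₂ * mt.2) ?_ ?_ ?_ ?_ ?_
      (hst _ _ <| .inl ⟨E, F, E₂, hX, .inl ⟨rfl, by simp [mono_one]⟩⟩) <;>
      ext <;> simp [*, mul_assoc]
  · refine TrivModR.sub_of_mono_mul_mul_mono hlt (a.1, c.2) b (1, mt.2 * E₂) 1 (E, 1)
      (F, E₂ * ms.2) (ms.1, mt.2 * E₂ * ms.2) ?_ ?_ ?_ ?_ ?_
      (hst _ _ <| .inl ⟨E, F, E₂, hX, .inr ⟨rfl, by simp [mono_one]⟩⟩) <;>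
      ext <;> simp [*, mul_assoc]
  · refine TrivModR.sub_of_mono_mul_mul_mono hlt a b 1 1 (E, E₂) (F, F₂) (ms.1, ms.2)
      ?_ ?_ ?_ ?_ ?_ (hst _ _ <| .inr <| .inr <| .inl
        ⟨E, F, E₂, F₂, hX, hY, rfl, by simp [mono_one]⟩) <;>
      ext <;> simp [*, mul_assoc]
  · refine TrivModR.sub_of_mono_mul_mul_mono hlt (a.1, c.2) (b.1, d.2) (1, E₂) (1, F₂) (E, 1)
      (F, 1) (ms.1, mt.2) ?_ ?_ ?_ ?_ ?_ (hst _ _ <| .inr <| .inr <| .inr <| .inl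
        ⟨E, F, E₂, F₂, hX, hY, rfl, rfl⟩) <;>
      ext <;> simp [*, mul_assoc]
  · refine TrivModR.sub_of_mono_mul_mul_mono hlt a (b.1, d.2) 1 (1, G₂) (E, E₂) (F, 1)
      (ms.1, ms.2 * G₂) ?_ ?_ ?_ ?_ ?_ (hst _ _ <| .inr <| .inr <| .inr <| .inr <| .inr <| .inr <|
        .inr <| .inr <| .inl ⟨E, F, G₂, E₂, hX, .inl ⟨hY, hlen, rfl, by simp [mono_one]⟩⟩) <;>
      ext <;> simp [*, -hY, mul_assoc]
  · refine TrivModR.sub_of_mono_mul_mul_mono hlt (a.1, c.2) b (1, E₂) 1 (E, 1) (F, G₂)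
      (ms.1, E₂ * ms.2) ?_ ?_ ?_ ?_ ?_ (hst _ _ <| .inr <| .inr <| .inr <| .inr <| .inr <| .inr <|
        .inr <| .inr <| .inl
          ⟨E, F, E₂, G₂, hX, .inr ⟨hY.symm, hY ▸ hlen, rfl, by simp [mono_one]⟩⟩) <;>
      ext <;> simp [*, -hY, mul_assoc]

theorem trivModR_of_intersectionX (hlt : MonOrd lt)
    (hst : ∀ p w₀, IsComp s t ms mt p w₀ → TrivModR lt S w₀ p) {E G : FreeMonoid X}
    (hX : ms.1 * G = E * mt.1) (hlenX : (ms.1 * G).length < ms.1.length + mt.1.length)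
    (hc : c.1 = a.1 * E) (hb : b.1 = G * d.1) (hwY : a.2 * ms.2 * b.2 = c.2 * mt.2 * d.2) :
    TrivModR lt S (a * ms * b) (mono k a * s * mono k b - mono k c * t * mono k d) := by
  rcases occurrence_cases hwY with ⟨E₂, h₁, h₂⟩ | ⟨E₂, h₁, h₂⟩ | ⟨E₂, F₂, hY, h₁, h₂⟩ |
    ⟨E₂, F₂, hY, h₁, h₂⟩ | ⟨E₂, G₂, hY, hlen, h₁, h₂⟩ | ⟨E₂, G₂, hY, hlen, h₁, h₂⟩ <;> clear hwY
  · refine TrivModR.sub_of_mono_mul_mul_mono hlt a d 1 (G, E₂ * mt.2) (E, ms.2 * E₂) 1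
      (ms.1 * G, ms.2 * E₂ * mt.2) ?_ ?_ ?_ ?_ ?_ (hst _ _ <| .inr <| .inr <| .inr <| .inr <|
        .inl ⟨G, E, E₂, hX, hlenX, .inl ⟨rfl, by simp [mono_one]⟩⟩) <;>
      ext <;> simp [*, -hX, mul_assoc]
  · refine TrivModR.sub_of_mono_mul_mul_mono hlt (a.1, c.2) (d.1, b.2) (1, mt.2 * E₂) (G, 1)
      (E, 1) (1, E₂ * ms.2) (ms.1 * G, mt.2 * E₂ * ms.2) ?_ ?_ ?_ ?_ ?_
      (hst _ _ <| .inr <| .inr <| .inr <| .inr <|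
        .inl ⟨G, E, E₂, hX, hlenX, .inr ⟨rfl, rfl⟩⟩) <;>
      ext <;> simp [*, -hX, mul_assoc]
  · refine TrivModR.sub_of_mono_mul_mul_mono hlt a (d.1, b.2) 1 (G, 1) (E, E₂) (1, F₂)
      (ms.1 * G, ms.2) ?_ ?_ ?_ ?_ ?_ (hst _ _ <| .inr <| .inr <| .inr <| .inr <| .inr <| .inr <|
        .inr <| .inr <| .inr ⟨G, E, E₂, F₂, hX, hlenX, .inl ⟨hY, rfl, by simp [mono_one]⟩⟩) <;>
      ext <;> simp [*, -hX, mul_assoc]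
  · refine TrivModR.sub_of_mono_mul_mul_mono hlt (a.1, c.2) d (1, E₂) (G, F₂) (E, 1) 1
      (ms.1 * G, mt.2) ?_ ?_ ?_ ?_ ?_ (hst _ _ <| .inr <| .inr <| .inr <| .inr <| .inr <| .inr <|
        .inr <| .inr <| .inr ⟨G, E, E₂, F₂, hX, hlenX, .inr ⟨hY, rfl, by simp [mono_one]⟩⟩) <;>
      ext <;> simp [*, -hX, mul_assoc]
  · refine TrivModR.sub_of_mono_mul_mul_mono hlt a d 1 (G, G₂) (E, E₂) 1 (ms.1 * G, ms.2 * G₂)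
      ?_ ?_ ?_ ?_ ?_ (hst _ _ <| .inr <| .inr <| .inr <| .inr <| .inr <| .inr <| .inl
        ⟨G, E, G₂, E₂, hX, hY, hlenX, hlen, rfl, by simp [mono_one]⟩) <;>
      ext <;> simp [*, -hX, -hY, mul_assoc]
  · refine TrivModR.sub_of_mono_mul_mul_mono hlt (a.1, c.2) (d.1, b.2) (1, E₂) (G, 1) (E, 1)
      (1, G₂) (ms.1 * G, E₂ * ms.2) ?_ ?_ ?_ ?_ ?_ (hst _ _ <| .inr <| .inr <| .inr <| .inr <|
        .inr <| .inr <| .inr <| .inl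
          ⟨G, E, E₂, G₂, hX, hY.symm, hlenX, hY ▸ hlen, rfl, rfl⟩) <;>
      ext <;> simp [*, -hX, -hY, mul_assoc]

theorem trivModR_of_onlyY (hlt : MonOrd lt)
    (hst : ∀ p w₀, IsComp s t ms mt p w₀ → TrivModR lt S w₀ p)
    (hX : (∃ E, c.1 = a.1 * ms.1 * E ∧ b.1 = E * mt.1 * d.1) ∨
      ∃ E, a.1 = c.1 * mt.1 * E ∧ d.1 = E * ms.1 * b.1)
    (hY : (∃ E₂ F₂, ms.2 = E₂ * mt.2 * F₂ ∧ c.2 = a.2 * E₂ ∧ d.2 = F₂ * b.2) ∨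
      ∃ E₂ G₂, ms.2 * G₂ = E₂ * mt.2 ∧ (ms.2 * G₂).length < ms.2.length + mt.2.length ∧
        c.2 = a.2 * E₂ ∧ b.2 = G₂ * d.2) :
    TrivModR lt S (a * ms * b) (mono k a * s * mono k b - mono k c * t * mono k d) := by
  rcases hX with ⟨E, h₁, h₂⟩ | ⟨E, h₁, h₂⟩ <;>
    rcases hY with ⟨E₂, F₂, hY, h₃, h₄⟩ | ⟨E₂, G₂, hY, hlen, h₃, h₄⟩
  · refine TrivModR.sub_of_mono_mul_mul_mono hlt a (d.1, b.2) 1 (E * mt.1, 1) (ms.1 * E, E₂)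
      (1, F₂) (ms.1 * E * mt.1, ms.2) ?_ ?_ ?_ ?_ ?_
      (hst _ _ <| .inr <| .inl ⟨E, E₂, F₂, hY, .inl ⟨rfl, by simp [mono_one]⟩⟩) <;>
      ext <;> simp [*, mul_assoc]
  · refine TrivModR.sub_of_mono_mul_mul_mono hlt a d 1 (E * mt.1, G₂) (ms.1 * E, E₂) 1
      (ms.1 * E * mt.1, ms.2 * G₂) ?_ ?_ ?_ ?_ ?_ (hst _ _ <| .inr <| .inr <| .inr <| .inr <|
        .inr <| .inl ⟨E, G₂, E₂, hY, hlen, .inl ⟨rfl, by simp [mono_one]⟩⟩) <;>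
      ext <;> simp [*, -hY, mul_assoc]
  · refine TrivModR.sub_of_mono_mul_mul_mono hlt (c.1, a.2) b (mt.1 * E, 1) 1 (1, E₂)
      (E * ms.1, F₂) (mt.1 * E * ms.1, ms.2) ?_ ?_ ?_ ?_ ?_
      (hst _ _ <| .inr <| .inl ⟨E, E₂, F₂, hY, .inr ⟨rfl, by simp [mono_one]⟩⟩) <;>
      ext <;> simp [*, mul_assoc]
  · refine TrivModR.sub_of_mono_mul_mul_mono hlt (c.1, a.2) (b.1, d.2) (mt.1 * E, 1) (1, G₂)
      (1, E₂) (E * ms.1, 1) (mt.1 * E * ms.1, ms.2 * G₂) ?_ ?_ ?_ ?_ ?_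
      (hst _ _ <| .inr <| .inr <| .inr <| .inr <| .inr <| .inl
        ⟨E, G₂, E₂, hY, hlen, .inr ⟨rfl, rfl⟩⟩) <;>
      ext <;> simp [*, -hY, mul_assoc]

theorem trivModR_of_separatedX (hlt : MonOrd lt) (hmon : ∀ s ∈ S, MonicR lt s) (hs : s ∈ S)
    (ht : t ∈ S) (hms : IsLeadR lt s ms) (hmt : IsLeadR lt t mt)
    (hst : ∀ p w₀, IsComp s t ms mt p w₀ → TrivModR lt S w₀ p)
    (hts : ∀ p w₀, IsComp t s mt ms p w₀ → TrivModR lt S w₀ p) (hw : a * ms * b = c * mt * d)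
    (hX : (∃ E, c.1 = a.1 * ms.1 * E ∧ b.1 = E * mt.1 * d.1) ∨
      ∃ E, a.1 = c.1 * mt.1 * E ∧ d.1 = E * ms.1 * b.1) :
    TrivModR lt S (a * ms * b) (mono k a * s * mono k b - mono k c * t * mono k d) := by
  have hsepX : NonOverlapping a.1 ms.1 b.1 c.1 mt.1 d.1 := by
    rcases hX with ⟨E, h₁, h₂⟩ | ⟨E, h₁, h₂⟩
    exacts [.of_before h₁ h₂, .of_after h₁ h₂]
  have hsep := fun hsepY => TrivModR.sub_of_nonOverlapping hlt hs ht (hmon s hs) (hmon t ht)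
    hms hmt hw (NonOverlapping.prod hsepX hsepY)
  rcases occurrence_cases (congrArg Prod.snd hw) with ⟨E₂, h₁, h₂⟩ | ⟨E₂, h₁, h₂⟩ | hY | hY | hY |
    ⟨E₂, G₂, hY, hlen, h₁, h₂⟩
  · exact hsep (.of_before h₁ h₂)
  · exact hsep (.of_after h₁ h₂)
  · exact trivModR_of_onlyY hlt hst hX (.inl hY)
  · exact (trivModR_of_onlyY hlt hts hX.symm (.inl hY)).sub_symm hw
  · exact trivModR_of_onlyY hlt hst hX (.inr hY)
  · exact (trivModR_of_onlyY hlt hts hX.symm (.inr ⟨E₂, G₂, hY, by omega, h₁, h₂⟩)).sub_symm hw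

end Compositions

theorem IsGSB.trivialOverlaps {k X Y : Type*} [CommRing k] {lt : NW X Y → NW X Y → Prop}
    {S : Set (MonoidAlgebra k (NW X Y))} (hlt : MonOrd lt) (hS : IsGSB lt S) :
    TrivialOverlaps lt S := by
  intro s hs t ht ms mt a b c d hms hmt hw
  have hst := fun p w₀ => hS.2 s hs t ht ms mt p w₀ hms hmt
  have hts := fun p w₀ => hS.2 t ht s hs mt ms p w₀ hmt hms
  have hwY : a.2 * ms.2 * b.2 = c.2 * mt.2 * d.2 := congrArg Prod.snd hw
  rcases FreeMonoid.occurrence_cases (congrArg Prod.fst hw) with hX | hX | ⟨E, F, hX, h₁, h₂⟩ |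
    ⟨E, F, hX, h₁, h₂⟩ | ⟨E, G, hX, hlen, h₁, h₂⟩ | ⟨E, G, hX, hlen, h₁, h₂⟩
  · exact trivModR_of_separatedX hlt hS.1 hs ht hms hmt hst hts hw (.inl hX)
  · exact trivModR_of_separatedX hlt hS.1 hs ht hms hmt hst hts hw (.inr hX)
  · exact trivModR_of_inclusionX hlt hst hX h₁ h₂ hwY
  · exact (trivModR_of_inclusionX hlt hts hX h₁ h₂ hwY.symm).sub_symm hw
  · exact trivModR_of_intersectionX hlt hst hX hlen h₁ h₂ hwY
  · exact (trivModR_of_intersectionX hlt hts hX (by omega) h₁ h₂ hwY.symm).sub_symm hw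

theorem stmt_17_general {k X Y : Type*} [Field k]
    (lt : NW X Y → NW X Y → Prop) (hlt : MonOrd lt)
    (S : Set (MonoidAlgebra k (NW X Y))) (hS : IsGSB lt S)
    (f : MonoidAlgebra k (NW X Y))
    (n : ℕ) (α : Fin n → k) (a b : Fin n → NW X Y)
    (s : Fin n → MonoidAlgebra k (NW X Y)) (hs : ∀ i, s i ∈ S)
    (hrep : f = ∑ i, α i • (mono k (a i) * s i * mono k (b i)))
    (m : Fin n → NW X Y) (hm : ∀ i, IsLeadR lt (s i) (m i))
    (w : NW X Y) (l : ℕ) (hl : 2 ≤ l) (hln : l ≤ n)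
    (hmax : ∀ i : Fin n, (i : ℕ) < l → a i * m i * b i = w)
    (hrest : ∀ i : Fin n, l ≤ (i : ℕ) → lt (a i * m i * b i) w) :
    (∃ (n' : ℕ) (α' : Fin n' → k) (a' b' : Fin n' → NW X Y)
       (s' : Fin n' → MonoidAlgebra k (NW X Y)) (m' : Fin n' → NW X Y)
       (w' : NW X Y) (l' : ℕ),
       (∀ i, s' i ∈ S) ∧
       f = ∑ i, α' i • (mono k (a' i) * s' i * mono k (b' i)) ∧
       (∀ i, IsLeadR lt (s' i) (m' i)) ∧
       l' ≤ n' ∧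
       (∀ i : Fin n', (i : ℕ) < l' → a' i * m' i * b' i = w') ∧
       (∀ i : Fin n', l' ≤ (i : ℕ) → lt (a' i * m' i * b' i) w') ∧
       ((w' = w ∧ l' < l) ∨ lt w' w)) ∧
    (∀ mf : NW X Y, IsLeadR lt f mf →
      ∃ t ∈ S, ∃ mt : NW X Y, IsLeadR lt t mt ∧ ∃ c d : NW X Y, mf = c * mt * d) := by
  let R : SWords k lt S n := ⟨a, b, s, m, hs, hm⟩
  have hR : f = R.sum α := hrep
  have hover := hS.trivialOverlaps hlt
  refine ⟨?_, fun mf hmf => ?_⟩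
  · obtain ⟨n', R', α', hsum, hl', hmax', hrest'⟩ := R.exists_fewer_max hover α hl hln hmax hrest
    exact ⟨n', α', R'.left, R'.right, R'.gen, R'.lead, w, l - 1, R'.gen_mem, hR.trans hsum.symm,
      R'.isLeadR, hl', hmax', hrest', .inl ⟨rfl, by omega⟩⟩
  · refine R.exists_lead_mul_eq hlt hS.1 hover w α (fun i => ?_) (hR ▸ hmf)
    by_cases hi : (i : ℕ) < l
    · exact .inl (hmax i hi)
    · exact .inr (hrest i (by omega))

/-- the key induction step in the proof of the Composition-Diamond lemma.
If a nonzero `f ∈ Id(S)` is written as `Σ αᵢ aᵢsᵢbᵢ` where the maximal words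
`w = aᵢs̄ᵢbᵢ` are attained exactly for the first `l ≥ 2` indices, and `S` is a
Gröbner–Shirshov basis, then `f` admits another such representation in which either the
number of maximal terms decreases (with the same `w`) or the maximal word decreases;
consequently `f̄ = a·s̄·b` for some `s ∈ S`. -/
theorem stmt_17 {k X Y : Type*} [Field k]
    (lt : NW X Y → NW X Y → Prop) (hlt : MonOrd lt)
    (S : Set (MonoidAlgebra k (NW X Y))) (hS : IsGSB lt S)
    (f : MonoidAlgebra k (NW X Y)) (hf : f ≠ 0)
    (n : ℕ) (α : Fin n → k) (a b : Fin n → NW X Y)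
    (s : Fin n → MonoidAlgebra k (NW X Y)) (hs : ∀ i, s i ∈ S)
    (hrep : f = ∑ i, α i • (mono k (a i) * s i * mono k (b i)))
    (m : Fin n → NW X Y) (hm : ∀ i, IsLeadR lt (s i) (m i))
    (w : NW X Y) (l : ℕ) (hl : 2 ≤ l) (hln : l ≤ n)
    (hmax : ∀ i : Fin n, (i : ℕ) < l → a i * m i * b i = w)
    (hrest : ∀ i : Fin n, l ≤ (i : ℕ) → lt (a i * m i * b i) w) :
    (∃ (n' : ℕ) (α' : Fin n' → k) (a' b' : Fin n' → NW X Y)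
       (s' : Fin n' → MonoidAlgebra k (NW X Y)) (m' : Fin n' → NW X Y)
       (w' : NW X Y) (l' : ℕ),
       (∀ i, s' i ∈ S) ∧
       f = ∑ i, α' i • (mono k (a' i) * s' i * mono k (b' i)) ∧
       (∀ i, IsLeadR lt (s' i) (m' i)) ∧
       l' ≤ n' ∧
       (∀ i : Fin n', (i : ℕ) < l' → a' i * m' i * b' i = w') ∧
       (∀ i : Fin n', l' ≤ (i : ℕ) → lt (a' i * m' i * b' i) w') ∧
       ((w' = w ∧ l' < l) ∨ lt w' w)) ∧
    (∀ mf : NW X Y, IsLeadR lt f mf →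
      ∃ t ∈ S, ∃ mt : NW X Y, IsLeadR lt t mt ∧ ∃ c d : NW X Y, mf = c * mt * d) :=
  stmt_17_general lt hlt S hS f n α a b s hs hrep m hm w l hl hln hmax hrest
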